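/- arXiv:2410.14006 — 3 statements merged into one kernel-verified Lean document; each statement's English description precedes it below -/
import Mathlib

section
/- If a transposition σ and a 3-cycle τ together generate the symmetric group S₄, then their product στ is a 4-cycle. -/
/-!
The 3-cycle `τ` fixes exactly one point `p`. If `σ` also fixed `p`, so would every element of the
group they generate; hence `σ = (p q)` with `q ≠ p`, and then `στ` has no fixed point. Being odd
with support of size 4, `στ` has cycle type `(4)` rather than `(2, 2)`.
-/

open Equiv Equiv.Perm Finset

namespace Equiv.Perm

theorem exists_mem_apply_ne_of_closure_eq_top {α : Type*} [Nontrivial α] {s : Set (Perm α)}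
    (hs : Subgroup.closure s = ⊤) (p : α) : ∃ g ∈ s, g p ≠ p := by
  classical
  by_contra! h
  have hstab : Subgroup.closure s ≤ MulAction.stabilizer (Perm α) p :=
    (Subgroup.closure_le _).mpr h
  obtain ⟨q, hq⟩ := exists_ne p
  have : swap p q ∈ MulAction.stabilizer (Perm α) p := hstab (hs ▸ Subgroup.mem_top _)
  exact hq (by simpa using this)

theorem IsSwap.eq_swap_of_apply_ne {α : Type*} [DecidableEq α] {σ : Perm α} (hσ : σ.IsSwap)
    {p : α} (hp : σ p ≠ p) : σ = swap p (σ p) := by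
  obtain ⟨x, y, -, rfl⟩ := hσ
  by_cases hx : p = x
  · subst hx; simp
  by_cases hy : p = y
  · subst hy; simp [swap_comm]
  · simp [swap_apply_of_ne_of_ne hx hy] at hp

section Fintype

variable {α : Type*} [DecidableEq α] [Fintype α]

theorem exists_support_eq_compl_singleton {g : Perm α}
    (h : #g.support + 1 = Fintype.card α) : ∃ p, g.support = {p}ᶜ := by
  obtain ⟨p, hp⟩ := card_eq_one.mp (by rw [card_compl]; omega : #g.supportᶜ = 1)
  exact ⟨p, by rw [← hp, compl_compl]⟩

theorem support_swap_mul_eq_univ {τ : Perm α} {p q : α} (hτ : τ.support = {p}ᶜ) (hqp : q ≠ p) :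
    (swap p q * τ).support = univ := by
  have hfix : ∀ a, τ a = a ↔ a = p := fun a => by
    rw [← notMem_support, hτ]; simp
  refine eq_univ_of_forall fun a => mem_support.mpr fun ha => ?_
  rw [mul_apply] at ha
  by_cases hap : a = p
  · subst hap
    rw [(hfix a).mpr rfl, swap_apply_left] at ha
    exact hqp ha
  · have hτap : τ a ≠ p := fun h => hap (τ.injective (h.trans ((hfix p).mpr rfl).symm))
    by_cases hτaq : τ a = q
    · rw [hτaq, swap_apply_right] at ha
      exact hap ha.symm
    · rw [swap_apply_of_ne_of_ne hτap hτaq] at ha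
      exact hap ((hfix a).mp ha)

theorem isCycle_of_card_support_eq_four_of_sign_eq_neg_one {g : Perm α}
    (hcard : #g.support = 4) (hsign : sign g = -1) : g.IsCycle := by
  rw [← card_cycleType_eq_one]
  have hle : Multiset.card g.cycleType ≤ 2 := by
    suffices 2 * Multiset.card g.cycleType ≤ 4 by omega
    rw [← hcard, ← sum_cycleType, mul_comm]
    exact Multiset.card_nsmul_le_sum fun _ => two_le_of_mem_cycleType
  rw [sign_of_cycleType, sum_cycleType, hcard] at hsign
  interval_cases Multiset.card g.cycleType <;> first | rfl | exact absurd hsign (by decide)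

end Fintype

end Equiv.Perm

/-- If a transposition `σ` and a 3-cycle `τ` generate `S₄`, then `στ` is a 4-cycle. -/
theorem swap_mul_threeCycle_isFourCycle (σ τ : Equiv.Perm (Fin 4))
    (hσ : σ.IsSwap) (hτ : τ.IsThreeCycle) (hgen : Subgroup.closure {σ, τ} = ⊤) :
    (σ * τ).IsCycle ∧ (σ * τ).support.card = 4 := by
  obtain ⟨p, hτp⟩ := exists_support_eq_compl_singleton (g := τ) (by simp [hτ.card_support])
  have hσp : σ p ≠ p := by
    obtain ⟨g, hg, hgp⟩ := exists_mem_apply_ne_of_closure_eq_top hgen p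
    rcases hg with rfl | rfl
    · exact hgp
    · simp [← notMem_support, hτp] at hgp
  have hsupport : (σ * τ).support = univ := by
    rw [hσ.eq_swap_of_apply_ne hσp]
    exact support_swap_mul_eq_univ hτp hσp
  have hcard : #(σ * τ).support = 4 := by simp [hsupport]
  have hsign : sign (σ * τ) = -1 := by simp [hσ.sign_eq, hτ.sign]
  exact ⟨isCycle_of_card_support_eq_four_of_sign_eq_neg_one hcard hsign, hcard⟩
end

section
/- The two matrices (i 0; 0 1) and (1 −1; i i), viewed as elements of PGL₂(ℂ), generate a subgroup isomorphic to the symmetric group S₄. -/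
open Complex Matrix

/-- `PGL₂(ℂ) = GL₂(ℂ)/ℂ*·I`, the quotient of `GL₂(ℂ)` by its center. -/
abbrev PGL2C := GL (Fin 2) ℂ ⧸ Subgroup.center (GL (Fin 2) ℂ)

/-- The matrix `(i 0; 0 1)` as an element of `GL₂(ℂ)`. -/
noncomputable def A : GL (Fin 2) ℂ :=
  Matrix.GeneralLinearGroup.mkOfDetNeZero !![Complex.I, 0; 0, 1] (by
    simp [Matrix.det_fin_two_of, Complex.I_ne_zero])

/-- The matrix `(1 −1; i i)` as an element of `GL₂(ℂ)`. -/
noncomputable def B : GL (Fin 2) ℂ :=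
  Matrix.GeneralLinearGroup.mkOfDetNeZero !![1, -1; Complex.I, Complex.I] (by
    simp [Matrix.det_fin_two_of])

namespace S4PGL

open Equiv GaussianInt

def Mtab : Fin 4 → Fin 4 → Fin 4 → Matrix (Fin 2) (Fin 2) GaussianInt :=
  ![![![!![(⟨1, 0⟩ : GaussianInt), (⟨0, 0⟩ : GaussianInt); (⟨0, 0⟩ : GaussianInt), (⟨1, 0⟩ : GaussianInt)], !![(⟨1, 0⟩ : GaussianInt), (⟨0, 0⟩ : GaussianInt); (⟨0, 0⟩ : GaussianInt), (⟨1, 0⟩ : GaussianInt)], !![(⟨1, 0⟩ : GaussianInt), (⟨0, 0⟩ : GaussianInt); (⟨0, 0⟩ : GaussianInt), (⟨1, 0⟩ : GaussianInt)], !![(⟨1, 0⟩ : GaussianInt), (⟨0, 0⟩ : GaussianInt); (⟨0, 0⟩ : GaussianInt), (⟨1, 0⟩ : GaussianInt)]],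
   ![!![(⟨1, 0⟩ : GaussianInt), (⟨0, 0⟩ : GaussianInt); (⟨0, 0⟩ : GaussianInt), (⟨1, 0⟩ : GaussianInt)], !![(⟨1, 0⟩ : GaussianInt), (⟨0, 0⟩ : GaussianInt); (⟨0, 0⟩ : GaussianInt), (⟨1, 0⟩ : GaussianInt)], !![(⟨1, 0⟩ : GaussianInt), (⟨0, 0⟩ : GaussianInt); (⟨0, 0⟩ : GaussianInt), (⟨1, 0⟩ : GaussianInt)], !![(⟨1, 0⟩ : GaussianInt), (⟨1, 0⟩ : GaussianInt); (⟨1, 0⟩ : GaussianInt), (⟨-1, 0⟩ : GaussianInt)]],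
   ![!![(⟨1, 0⟩ : GaussianInt), (⟨0, 0⟩ : GaussianInt); (⟨0, 0⟩ : GaussianInt), (⟨1, 0⟩ : GaussianInt)], !![(⟨1, 0⟩ : GaussianInt), (⟨0, -1⟩ : GaussianInt); (⟨0, 1⟩ : GaussianInt), (⟨-1, 0⟩ : GaussianInt)], !![(⟨1, 0⟩ : GaussianInt), (⟨0, 0⟩ : GaussianInt); (⟨0, 0⟩ : GaussianInt), (⟨1, 0⟩ : GaussianInt)], !![(⟨1, 0⟩ : GaussianInt), (⟨0, 1⟩ : GaussianInt); (⟨-1, 0⟩ : GaussianInt), (⟨0, 1⟩ : GaussianInt)]],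
   ![!![(⟨1, 0⟩ : GaussianInt), (⟨0, 0⟩ : GaussianInt); (⟨0, 0⟩ : GaussianInt), (⟨1, 0⟩ : GaussianInt)], !![(⟨1, 0⟩ : GaussianInt), (⟨-1, 0⟩ : GaussianInt); (⟨0, -1⟩ : GaussianInt), (⟨0, -1⟩ : GaussianInt)], !![(⟨0, 0⟩ : GaussianInt), (⟨1, 0⟩ : GaussianInt); (⟨0, -1⟩ : GaussianInt), (⟨0, 0⟩ : GaussianInt)], !![(⟨1, 0⟩ : GaussianInt), (⟨0, 0⟩ : GaussianInt); (⟨0, 0⟩ : GaussianInt), (⟨1, 0⟩ : GaussianInt)]]],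
  ![![!![(⟨1, 0⟩ : GaussianInt), (⟨0, 0⟩ : GaussianInt); (⟨0, 0⟩ : GaussianInt), (⟨1, 0⟩ : GaussianInt)], !![(⟨1, 0⟩ : GaussianInt), (⟨0, 0⟩ : GaussianInt); (⟨0, 0⟩ : GaussianInt), (⟨1, 0⟩ : GaussianInt)], !![(⟨1, 0⟩ : GaussianInt), (⟨-1, 0⟩ : GaussianInt); (⟨-1, 0⟩ : GaussianInt), (⟨-1, 0⟩ : GaussianInt)], !![(⟨0, 0⟩ : GaussianInt), (⟨1, 0⟩ : GaussianInt); (⟨-1, 0⟩ : GaussianInt), (⟨0, 0⟩ : GaussianInt)]],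
   ![!![(⟨1, 0⟩ : GaussianInt), (⟨0, 0⟩ : GaussianInt); (⟨0, 0⟩ : GaussianInt), (⟨1, 0⟩ : GaussianInt)], !![(⟨1, 0⟩ : GaussianInt), (⟨0, 0⟩ : GaussianInt); (⟨0, 0⟩ : GaussianInt), (⟨1, 0⟩ : GaussianInt)], !![(⟨1, 0⟩ : GaussianInt), (⟨0, 0⟩ : GaussianInt); (⟨0, 0⟩ : GaussianInt), (⟨1, 0⟩ : GaussianInt)], !![(⟨1, 0⟩ : GaussianInt), (⟨0, 0⟩ : GaussianInt); (⟨0, 0⟩ : GaussianInt), (⟨1, 0⟩ : GaussianInt)]],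
   ![!![(⟨1, 0⟩ : GaussianInt), (⟨1, 0⟩ : GaussianInt); (⟨0, -1⟩ : GaussianInt), (⟨0, 1⟩ : GaussianInt)], !![(⟨1, 0⟩ : GaussianInt), (⟨0, 0⟩ : GaussianInt); (⟨0, 0⟩ : GaussianInt), (⟨1, 0⟩ : GaussianInt)], !![(⟨1, 0⟩ : GaussianInt), (⟨0, 0⟩ : GaussianInt); (⟨0, 0⟩ : GaussianInt), (⟨1, 0⟩ : GaussianInt)], !![(⟨0, 1⟩ : GaussianInt), (⟨0, 0⟩ : GaussianInt); (⟨0, 0⟩ : GaussianInt), (⟨1, 0⟩ : GaussianInt)]],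
   ![!![(⟨1, 0⟩ : GaussianInt), (⟨0, 1⟩ : GaussianInt); (⟨0, 1⟩ : GaussianInt), (⟨1, 0⟩ : GaussianInt)], !![(⟨1, 0⟩ : GaussianInt), (⟨0, 0⟩ : GaussianInt); (⟨0, 0⟩ : GaussianInt), (⟨1, 0⟩ : GaussianInt)], !![(⟨1, 0⟩ : GaussianInt), (⟨0, -1⟩ : GaussianInt); (⟨1, 0⟩ : GaussianInt), (⟨0, 1⟩ : GaussianInt)], !![(⟨1, 0⟩ : GaussianInt), (⟨0, 0⟩ : GaussianInt); (⟨0, 0⟩ : GaussianInt), (⟨1, 0⟩ : GaussianInt)]]],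
  ![![!![(⟨1, 0⟩ : GaussianInt), (⟨0, 0⟩ : GaussianInt); (⟨0, 0⟩ : GaussianInt), (⟨1, 0⟩ : GaussianInt)], !![(⟨1, 0⟩ : GaussianInt), (⟨0, 1⟩ : GaussianInt); (⟨1, 0⟩ : GaussianInt), (⟨0, -1⟩ : GaussianInt)], !![(⟨1, 0⟩ : GaussianInt), (⟨0, 0⟩ : GaussianInt); (⟨0, 0⟩ : GaussianInt), (⟨1, 0⟩ : GaussianInt)], !![(⟨1, 0⟩ : GaussianInt), (⟨0, -1⟩ : GaussianInt); (⟨0, -1⟩ : GaussianInt), (⟨1, 0⟩ : GaussianInt)]],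
   ![!![(⟨0, 0⟩ : GaussianInt), (⟨1, 0⟩ : GaussianInt); (⟨0, 1⟩ : GaussianInt), (⟨0, 0⟩ : GaussianInt)], !![(⟨1, 0⟩ : GaussianInt), (⟨0, 0⟩ : GaussianInt); (⟨0, 0⟩ : GaussianInt), (⟨1, 0⟩ : GaussianInt)], !![(⟨1, 0⟩ : GaussianInt), (⟨0, 0⟩ : GaussianInt); (⟨0, 0⟩ : GaussianInt), (⟨1, 0⟩ : GaussianInt)], !![(⟨1, 0⟩ : GaussianInt), (⟨-1, 0⟩ : GaussianInt); (⟨0, 1⟩ : GaussianInt), (⟨0, 1⟩ : GaussianInt)]],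
   ![!![(⟨1, 0⟩ : GaussianInt), (⟨0, 0⟩ : GaussianInt); (⟨0, 0⟩ : GaussianInt), (⟨1, 0⟩ : GaussianInt)], !![(⟨1, 0⟩ : GaussianInt), (⟨0, 0⟩ : GaussianInt); (⟨0, 0⟩ : GaussianInt), (⟨1, 0⟩ : GaussianInt)], !![(⟨1, 0⟩ : GaussianInt), (⟨0, 0⟩ : GaussianInt); (⟨0, 0⟩ : GaussianInt), (⟨1, 0⟩ : GaussianInt)], !![(⟨1, 0⟩ : GaussianInt), (⟨0, 0⟩ : GaussianInt); (⟨0, 0⟩ : GaussianInt), (⟨1, 0⟩ : GaussianInt)]],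
   ![!![(⟨1, 0⟩ : GaussianInt), (⟨0, 0⟩ : GaussianInt); (⟨0, 0⟩ : GaussianInt), (⟨-1, 0⟩ : GaussianInt)], !![(⟨1, 0⟩ : GaussianInt), (⟨1, 0⟩ : GaussianInt); (⟨-1, 0⟩ : GaussianInt), (⟨1, 0⟩ : GaussianInt)], !![(⟨1, 0⟩ : GaussianInt), (⟨0, 0⟩ : GaussianInt); (⟨0, 0⟩ : GaussianInt), (⟨1, 0⟩ : GaussianInt)], !![(⟨1, 0⟩ : GaussianInt), (⟨0, 0⟩ : GaussianInt); (⟨0, 0⟩ : GaussianInt), (⟨1, 0⟩ : GaussianInt)]]],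
  ![![!![(⟨1, 0⟩ : GaussianInt), (⟨0, 0⟩ : GaussianInt); (⟨0, 0⟩ : GaussianInt), (⟨1, 0⟩ : GaussianInt)], !![(⟨1, 0⟩ : GaussianInt), (⟨0, 0⟩ : GaussianInt); (⟨0, 0⟩ : GaussianInt), (⟨0, 1⟩ : GaussianInt)], !![(⟨1, 0⟩ : GaussianInt), (⟨1, 0⟩ : GaussianInt); (⟨0, 1⟩ : GaussianInt), (⟨0, -1⟩ : GaussianInt)], !![(⟨1, 0⟩ : GaussianInt), (⟨0, 0⟩ : GaussianInt); (⟨0, 0⟩ : GaussianInt), (⟨1, 0⟩ : GaussianInt)]],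
   ![!![(⟨1, 0⟩ : GaussianInt), (⟨0, -1⟩ : GaussianInt); (⟨-1, 0⟩ : GaussianInt), (⟨0, -1⟩ : GaussianInt)], !![(⟨1, 0⟩ : GaussianInt), (⟨0, 0⟩ : GaussianInt); (⟨0, 0⟩ : GaussianInt), (⟨1, 0⟩ : GaussianInt)], !![(⟨1, 0⟩ : GaussianInt), (⟨0, 1⟩ : GaussianInt); (⟨0, -1⟩ : GaussianInt), (⟨-1, 0⟩ : GaussianInt)], !![(⟨1, 0⟩ : GaussianInt), (⟨0, 0⟩ : GaussianInt); (⟨0, 0⟩ : GaussianInt), (⟨1, 0⟩ : GaussianInt)]],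
   ![!![(⟨1, 0⟩ : GaussianInt), (⟨-1, 0⟩ : GaussianInt); (⟨1, 0⟩ : GaussianInt), (⟨1, 0⟩ : GaussianInt)], !![(⟨0, 0⟩ : GaussianInt), (⟨1, 0⟩ : GaussianInt); (⟨1, 0⟩ : GaussianInt), (⟨0, 0⟩ : GaussianInt)], !![(⟨1, 0⟩ : GaussianInt), (⟨0, 0⟩ : GaussianInt); (⟨0, 0⟩ : GaussianInt), (⟨1, 0⟩ : GaussianInt)], !![(⟨1, 0⟩ : GaussianInt), (⟨0, 0⟩ : GaussianInt); (⟨0, 0⟩ : GaussianInt), (⟨1, 0⟩ : GaussianInt)]],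
   ![!![(⟨1, 0⟩ : GaussianInt), (⟨0, 0⟩ : GaussianInt); (⟨0, 0⟩ : GaussianInt), (⟨1, 0⟩ : GaussianInt)], !![(⟨1, 0⟩ : GaussianInt), (⟨0, 0⟩ : GaussianInt); (⟨0, 0⟩ : GaussianInt), (⟨1, 0⟩ : GaussianInt)], !![(⟨1, 0⟩ : GaussianInt), (⟨0, 0⟩ : GaussianInt); (⟨0, 0⟩ : GaussianInt), (⟨1, 0⟩ : GaussianInt)], !![(⟨1, 0⟩ : GaussianInt), (⟨0, 0⟩ : GaussianInt); (⟨0, 0⟩ : GaussianInt), (⟨1, 0⟩ : GaussianInt)]]]]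

/-- The projective-representation table : a matrix over `ℤ[i]` for each permutation. -/
def M (σ : Equiv.Perm (Fin 4)) : Matrix (Fin 2) (Fin 2) GaussianInt := Mtab (σ 0) (σ 1) (σ 2)

/-- the 4-cycle generator -/
def p : Equiv.Perm (Fin 4) := finRotate 4
/-- the 3-cycle generator -/
def q : Equiv.Perm (Fin 4) := p * Equiv.swap 0 1

set_option maxHeartbeats 4000000 in
theorem fact1p : ∀ a : Equiv.Perm (Fin 4), ∀ i j k l : Fin 2,
    (M a * M p) i j * M (a * p) k l = (M a * M p) k l * M (a * p) i j := by decide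

set_option maxHeartbeats 4000000 in
theorem fact1q : ∀ a : Equiv.Perm (Fin 4), ∀ i j k l : Fin 2,
    (M a * M q) i j * M (a * q) k l = (M a * M q) k l * M (a * q) i j := by decide

set_option maxHeartbeats 1000000 in
theorem fact2 : ∀ σ : Equiv.Perm (Fin 4),
    M σ 0 0 * M σ 1 1 - M σ 0 1 * M σ 1 0 ≠ 0 := by decide

set_option maxHeartbeats 1000000 in
theorem fact3 : ∀ σ : Equiv.Perm (Fin 4),
    M σ 0 1 = 0 → M σ 1 0 = 0 → M σ 0 0 = M σ 1 1 → σ = 1 := by decide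

set_option maxHeartbeats 1000000 in
theorem factMp : M p = !![(⟨0,1⟩ : GaussianInt), 0; 0, 1] := by decide

set_option maxHeartbeats 1000000 in
theorem factMq : M q = !![(⟨1,0⟩ : GaussianInt), ⟨-1,0⟩; ⟨0,1⟩, ⟨0,1⟩] := by decide

/-- the complex matrix attached to a permutation -/
noncomputable def Mc (σ : Equiv.Perm (Fin 4)) : Matrix (Fin 2) (Fin 2) ℂ :=
  (M σ).map toComplex

theorem Mc_det_ne_zero (σ : Equiv.Perm (Fin 4)) : (Mc σ).det ≠ 0 := by
  rw [Mc, Matrix.det_fin_two]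
  simp only [Matrix.map_apply]
  rw [← _root_.map_mul, ← _root_.map_mul, ← map_sub]
  rw [Ne, toComplex_eq_zero]
  exact fact2 σ

/-- the element of `GL₂(ℂ)` attached to a permutation -/
noncomputable def N (σ : Equiv.Perm (Fin 4)) : GL (Fin 2) ℂ :=
  Matrix.GeneralLinearGroup.mkOfDetNeZero (Mc σ) (Mc_det_ne_zero σ)

theorem N_val (σ : Equiv.Perm (Fin 4)) : (N σ : Matrix (Fin 2) (Fin 2) ℂ) = Mc σ := rfl

/-- The candidate map `S₄ → PGL₂(ℂ)`. -/
noncomputable def f (σ : Equiv.Perm (Fin 4)) : PGL2C := QuotientGroup.mk (N σ)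

/-- a scalar matrix gives a central element of `GL₂(ℂ)` -/
theorem central_of_scalar (u : GL (Fin 2) ℂ) (c : ℂ)
    (h : (u : Matrix (Fin 2) (Fin 2) ℂ) = c • (1 : Matrix (Fin 2) (Fin 2) ℂ)) :
    u ∈ Subgroup.center (GL (Fin 2) ℂ) := by
  rw [Subgroup.mem_center_iff]
  intro g
  ext i j
  show ((g : Matrix (Fin 2) (Fin 2) ℂ) * u) i j = ((u : Matrix (Fin 2) (Fin 2) ℂ) * g) i j
  rw [h, Matrix.mul_smul, Matrix.smul_mul, Matrix.mul_one, Matrix.one_mul]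

/-- proportional invertible matrices -/
theorem exists_smul_of_prop (P Q : Matrix (Fin 2) (Fin 2) ℂ) (hP : P.det ≠ 0) (hQ : Q.det ≠ 0)
    (h : ∀ i j k l, P i j * Q k l = P k l * Q i j) :
    ∃ c : ℂ, P = c • Q := by
  have hQ0 : ∃ i j, Q i j ≠ 0 := by
    by_contra hc
    push_neg at hc
    apply hQ
    have : Q = 0 := by ext i j; exact hc i j
    simp [this]
  obtain ⟨i0, j0, hij⟩ := hQ0
  refine ⟨P i0 j0 / Q i0 j0, ?_⟩
  ext k l
  rw [Matrix.smul_apply, smul_eq_mul, div_mul_eq_mul_div, eq_div_iff hij]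
  linear_combination h k l i0 j0

theorem f_step (b : Equiv.Perm (Fin 4))
    (hb : ∀ a : Equiv.Perm (Fin 4), ∀ i j k l : Fin 2,
      (M a * M b) i j * M (a * b) k l = (M a * M b) k l * M (a * b) i j)
    (a : Equiv.Perm (Fin 4)) : f (a * b) = f a * f b := by
  have hP : (Mc a * Mc b).det ≠ 0 := by
    rw [Matrix.det_mul]
    exact mul_ne_zero (Mc_det_ne_zero a) (Mc_det_ne_zero b)
  have hprop : ∀ i j k l, (Mc a * Mc b) i j * Mc (a * b) k l
      = (Mc a * Mc b) k l * Mc (a * b) i j := by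
    intro i j k l
    have key : Mc a * Mc b = ((M a * M b).map toComplex) := by
      rw [Mc, Mc, Matrix.map_mul]
    rw [key]
    show toComplex _ * toComplex _ = toComplex _ * toComplex _
    rw [← _root_.map_mul, ← _root_.map_mul, hb a i j k l]
  obtain ⟨c, hc⟩ := exists_smul_of_prop _ _ hP (Mc_det_ne_zero (a * b)) hprop
  have hc0 : c ≠ 0 := by
    intro h0
    rw [h0, zero_smul] at hc
    rw [hc] at hP
    simp at hP
  -- the scalar unit
  set u : GL (Fin 2) ℂ := Matrix.GeneralLinearGroup.mkOfDetNeZero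
    (c • (1 : Matrix (Fin 2) (Fin 2) ℂ))
    (by rw [Matrix.det_smul, Matrix.det_one, mul_one]; exact pow_ne_zero _ hc0) with hu
  have huc : u ∈ Subgroup.center (GL (Fin 2) ℂ) := central_of_scalar u c rfl
  have hNab : N a * N b = u * N (a * b) := by
    ext i j
    show (Mc a * Mc b) i j = ((c • (1 : Matrix (Fin 2) (Fin 2) ℂ)) * Mc (a * b)) i j
    rw [hc, Matrix.smul_mul, Matrix.one_mul]
  show (QuotientGroup.mk (N (a * b)) : PGL2C) = QuotientGroup.mk (N a) * QuotientGroup.mk (N b)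
  have h2 : (QuotientGroup.mk (N a) * QuotientGroup.mk (N b) : PGL2C)
      = QuotientGroup.mk (N a * N b) := rfl
  rw [h2, hNab, QuotientGroup.eq]
  have hcomm := Subgroup.mem_center_iff.mp huc (N (a * b))
  rw [← hcomm, ← mul_assoc, inv_mul_cancel, one_mul]
  exact huc

theorem closure_pq : Subgroup.closure ({p, q} : Set (Equiv.Perm (Fin 4))) = ⊤ := by
  rw [eq_top_iff,
    ← Equiv.Perm.closure_cycle_adjacent_swap (σ := p) isCycle_finRotate support_finRotate 0,
    Subgroup.closure_le, Set.insert_subset_iff, Set.singleton_subset_iff]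
  constructor
  · exact Subgroup.subset_closure (Set.mem_insert _ _)
  · have hswap : Equiv.swap (0 : Fin 4) (p 0) = p⁻¹ * q := by
      rw [q, ← mul_assoc, inv_mul_cancel, one_mul]
      decide
    rw [hswap]
    exact mul_mem (inv_mem (Subgroup.subset_closure (Set.mem_insert _ _)))
      (Subgroup.subset_closure (Set.mem_insert_of_mem _ rfl))

theorem f_one : f 1 = 1 := by
  apply (QuotientGroup.eq_one_iff _).mpr
  apply central_of_scalar _ 1
  rw [one_smul, N_val]
  have h : M 1 = 1 := by decide
  rw [Mc, h, Matrix.map_one toComplex (map_zero _) (map_one _)]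

theorem f_mul (a b : Equiv.Perm (Fin 4)) : f (a * b) = f a * f b := by
  have hb : b ∈ Subgroup.closure ({p, q} : Set (Equiv.Perm (Fin 4))) := by
    rw [closure_pq]; trivial
  revert a
  induction hb using Subgroup.closure_induction with
  | mem x hx =>
    rcases hx with h | h
    · subst h; exact f_step p fact1p
    · rw [Set.mem_singleton_iff] at h; subst h; exact f_step q fact1q
  | one => intro a; rw [mul_one, f_one, mul_one]
  | mul x y _ _ hx hy =>
    intro a
    rw [← mul_assoc, hy, hx, mul_assoc, hy x]
  | inv x _ hx =>
    intro a
    have h1 : f x⁻¹ = (f x)⁻¹ := by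
      have h := hx x⁻¹
      rw [inv_mul_cancel, f_one] at h
      exact eq_inv_of_mul_eq_one_left h.symm
    have h2 := hx (a * x⁻¹)
    rw [mul_assoc, inv_mul_cancel, mul_one] at h2
    rw [h1, eq_mul_inv_iff_mul_eq]
    exact h2.symm

/-- the homomorphism `S₄ →* PGL₂(ℂ)` -/
noncomputable def ψ : Equiv.Perm (Fin 4) →* PGL2C := MonoidHom.mk' f f_mul

theorem ψ_injective : Function.Injective ψ := by
  rw [injective_iff_map_eq_one]
  intro σ hσ
  have hcen : N σ ∈ Subgroup.center (GL (Fin 2) ℂ) := (QuotientGroup.eq_one_iff _).mp hσ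
  rw [Subgroup.mem_center_iff] at hcen
  -- commute with upper and lower unitriangular matrices
  set U : GL (Fin 2) ℂ := Matrix.GeneralLinearGroup.mkOfDetNeZero !![1, 1; 0, 1]
    (by simp [Matrix.det_fin_two_of]) with hU
  set L : GL (Fin 2) ℂ := Matrix.GeneralLinearGroup.mkOfDetNeZero !![1, 0; 1, 1]
    (by simp [Matrix.det_fin_two_of]) with hL
  have hu := hcen U
  have hl := hcen L
  have hu' : (!![1, 1; 0, 1] : Matrix (Fin 2) (Fin 2) ℂ) * Mc σ
      = Mc σ * !![1, 1; 0, 1] := congrArg Units.val hu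
  have hl' : (!![1, 0; 1, 1] : Matrix (Fin 2) (Fin 2) ℂ) * Mc σ
      = Mc σ * !![1, 0; 1, 1] := congrArg Units.val hl
  have e10 : Mc σ 1 0 = 0 := by
    have := congrFun (congrFun hu' 0) 0
    simp [Matrix.mul_apply, Fin.sum_univ_two] at this
    linear_combination this
  have e01 : Mc σ 0 1 = 0 := by
    have := congrFun (congrFun hl' 0) 0
    simp [Matrix.mul_apply, Fin.sum_univ_two] at this
    linear_combination this
  have e00 : Mc σ 0 0 = Mc σ 1 1 := by
    have := congrFun (congrFun hu' 0) 1
    simp [Matrix.mul_apply, Fin.sum_univ_two] at this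
    linear_combination -this
  exact fact3 σ (toComplex_inj.mp (by rw [map_zero]; exact e01))
    (toComplex_inj.mp (by rw [map_zero]; exact e10))
    (toComplex_inj.mp e00)

theorem ψ_p : ψ p = QuotientGroup.mk A := by
  show QuotientGroup.mk (N p) = QuotientGroup.mk A
  have h : N p = A := by
    apply Units.ext
    show Mc p = !![Complex.I, 0; 0, 1]
    rw [Mc, factMp]
    ext i j
    fin_cases i <;> fin_cases j <;>
      simp [Matrix.map_apply, toComplex_def']
  rw [h]

theorem ψ_q : ψ q = QuotientGroup.mk B := by
  show QuotientGroup.mk (N q) = QuotientGroup.mk B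
  have h : N q = B := by
    apply Units.ext
    show Mc q = !![1, -1; Complex.I, Complex.I]
    rw [Mc, factMq]
    ext i j
    fin_cases i <;> fin_cases j <;>
      simp [Matrix.map_apply, toComplex_def']
  rw [h]

theorem ψ_range : ψ.range = Subgroup.closure
    {(QuotientGroup.mk A : PGL2C), QuotientGroup.mk B} := by
  rw [MonoidHom.range_eq_map, ← closure_pq, MonoidHom.map_closure, Set.image_insert_eq,
    Set.image_singleton, ψ_p, ψ_q]

end S4PGL

/-- The images of `(i 0; 0 1)` and `(1 −1; i i)` in `PGL₂(ℂ)` generate a subgroup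
isomorphic to the symmetric group `S₄`. -/
theorem closure_iso_S4 :
    Nonempty ((Subgroup.closure {(QuotientGroup.mk A : PGL2C), QuotientGroup.mk B}) ≃*
      Equiv.Perm (Fin 4)) := by
  exact ⟨((MonoidHom.ofInjective S4PGL.ψ_injective).trans
    (MulEquiv.subgroupCongr S4PGL.ψ_range)).symm⟩
end

section
/- Suppose P, Q ∈ ℂ[X] are polynomials with P(0) ≠ 0, Q(0) ≠ 0, r ∈ ℚ with r ∉ ℤ, and c ∈ ℂ. Then the polynomial identity P(X)Q(X)[2(λ−1)² + r(λ−1)(λ−2)²] + 16(P'(X)Q(X) − Q'(X)P(X))λ²(λ−2)² = c(λ−1)², where X = 16λ²/(λ−1) is substituted (i.e., both sides are viewed as rational functions of λ), is impossible: the left-hand side has degree in λ equal to deg P + deg Q + 3 while the right-hand side has degree 2. -/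
/-!
Multiplying by `(λ - 1)^(deg P + deg Q)` turns the identity into one between polynomials in `λ`:
for `deg p ≤ k`, `(λ - 1)^k p(16λ²/(λ - 1))` is the homogenization of `p` evaluated at
`(16λ², λ - 1)`, a polynomial of degree `≤ 2k` with coefficient `p_k 16^k` in degree `2k`.
The derivatives enter as `X·P'`, whose coefficients are `i pᵢ`, via `s (λ - 1) = 16λ²`.
In degree `2 deg P + 2 deg Q + 3` the left side then has coefficient
`lc P · lc Q · 16^(deg P + deg Q) · (r + deg P - deg Q)`, nonzero because `r ∉ ℤ`,
while the right side `c (λ - 1)^(deg P + deg Q + 2)` has smaller degree.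
-/
open Polynomial

/-- The variable `λ` of the rational function field `ℂ(λ)`. -/
noncomputable def l : RatFunc ℂ := RatFunc.X

/-- The substitution `X = 16λ²/(λ − 1)` (the Hauptmodul relation `ω₂ = 16λ²/(λ−1)`). -/
noncomputable def s : RatFunc ℂ := 16 * l ^ 2 / (l - 1)

open Finset

namespace Polynomial

lemma aeval_homogenize_eq_sum {R A : Type*} [CommSemiring R] [CommSemiring A] [Algebra R A]
    (p : R[X]) (k : ℕ) (x y : A) :
    MvPolynomial.aeval ![x, y] (p.homogenize k) =
      ∑ i ∈ range (k + 1), p.coeff i • (x ^ i * y ^ (k - i)) := by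
  simp only [homogenize, Nat.sum_antidiagonal_eq_sum_range_succ_mk, map_sum,
    MvPolynomial.aeval_monomial]
  refine sum_congr rfl fun i hi => ?_
  rw [Finsupp.update_eq_add_single, Finsupp.prod_add_index', Finsupp.prod_single_index,
    Finsupp.prod_single_index, Algebra.smul_def]
  all_goals simp [pow_add]

lemma aeval_homogenize_eq_aeval_div_mul_pow {R F : Type*} [CommSemiring R] [Field F]
    [Algebra R F] {p : R[X]} {k : ℕ} (hp : p.natDegree ≤ k) (x : F) {y : F} (hy : y ≠ 0) :
    MvPolynomial.aeval ![x, y] (p.homogenize k) = aeval (x / y) p * y ^ k := by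
  rw [aeval_homogenize_eq_sum, aeval_eq_sum_range' (Nat.lt_succ_of_le hp), sum_mul]
  refine sum_congr rfl fun i hi => ?_
  rw [smul_mul_assoc, div_pow, div_mul_eq_mul_div, mul_div_assoc,
    pow_sub₀ _ hy (Nat.lt_succ_iff.mp (mem_range.mp hi)), div_eq_mul_inv]

variable {R : Type*} [CommSemiring R] {a b : R[X]}

lemma natDegree_smul_pow_mul_pow_le (c : R) (i j : ℕ) :
    (c • (a ^ i * b ^ j)).natDegree ≤ i * a.natDegree + j * b.natDegree :=
  (natDegree_smul_le _ _).trans <|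
    natDegree_mul_le_of_le (natDegree_pow_le_of_le _ le_rfl) (natDegree_pow_le_of_le _ le_rfl)

lemma natDegree_aeval_homogenize_le (hba : b.natDegree ≤ a.natDegree) (p : R[X]) (k : ℕ) :
    (MvPolynomial.aeval ![a, b] (p.homogenize k)).natDegree ≤ k * a.natDegree := by
  rw [aeval_homogenize_eq_sum]
  refine natDegree_sum_le_of_forall_le _ _ fun i hi => ?_
  have hik := Nat.lt_succ_iff.mp (mem_range.mp hi)
  calc (p.coeff i • (a ^ i * b ^ (k - i))).natDegree
      ≤ i * a.natDegree + (k - i) * b.natDegree := natDegree_smul_pow_mul_pow_le _ _ _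
    _ ≤ i * a.natDegree + (k - i) * a.natDegree := by gcongr
    _ = k * a.natDegree := by rw [← add_mul, Nat.add_sub_cancel' hik]

lemma coeff_aeval_homogenize (hba : b.natDegree < a.natDegree) (p : R[X]) (k : ℕ) :
    (MvPolynomial.aeval ![a, b] (p.homogenize k)).coeff (k * a.natDegree) =
      p.coeff k * a.leadingCoeff ^ k := by
  rw [aeval_homogenize_eq_sum, finsetSum_coeff, sum_eq_single_of_mem k (by simp)]
  · rw [Nat.sub_self, pow_zero, mul_one, coeff_smul, smul_eq_mul, coeff_pow_mul_natDegree]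
  · intro i hi hik
    have hik := lt_of_le_of_ne (Nat.lt_succ_iff.mp (mem_range.mp hi)) hik
    refine coeff_eq_zero_of_natDegree_lt ?_
    calc (p.coeff i • (a ^ i * b ^ (k - i))).natDegree
        ≤ i * a.natDegree + (k - i) * b.natDegree := natDegree_smul_pow_mul_pow_le _ _ _
      _ < i * a.natDegree + (k - i) * a.natDegree := by gcongr; omega
      _ = k * a.natDegree := by rw [← add_mul, Nat.add_sub_cancel' hik.le]

lemma coeff_X_mul_derivative {R : Type*} [Semiring R] (p : R[X]) (n : ℕ) :
    (X * derivative p).coeff n = n * p.coeff n := by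
  cases n with
  | zero => simp
  | succ n => rw [coeff_X_mul, coeff_derivative, ← Nat.cast_succ, Nat.cast_comm]

lemma natDegree_X_mul_derivative_le {R : Type*} [Semiring R] (p : R[X]) :
    (X * derivative p).natDegree ≤ p.natDegree :=
  natDegree_le_iff_coeff_eq_zero.mpr fun n hn => by
    rw [coeff_X_mul_derivative, coeff_eq_zero_of_natDegree_lt (by exact_mod_cast hn), mul_zero]

end Polynomial

noncomputable def sNumerator (p : ℂ[X]) (k : ℕ) : ℂ[X] :=
  MvPolynomial.aeval ![16 * X ^ 2, X - 1] (p.homogenize k)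

lemma natDegree_sixteen_mul_X_sq : (16 * X ^ 2 : ℂ[X]).natDegree = 2 := by
  compute_degree!

lemma leadingCoeff_sixteen_mul_X_sq : (16 * X ^ 2 : ℂ[X]).leadingCoeff = 16 := by
  rw [← C_ofNat, leadingCoeff_C_mul_X_pow]

lemma natDegree_X_sub_one_lt : (X - 1 : ℂ[X]).natDegree < (16 * X ^ 2 : ℂ[X]).natDegree := by
  rw [natDegree_sixteen_mul_X_sq, ← C_1, natDegree_X_sub_C]
  norm_num

lemma natDegree_sNumerator_le (p : ℂ[X]) (k : ℕ) : (sNumerator p k).natDegree ≤ 2 * k :=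
  (natDegree_aeval_homogenize_le natDegree_X_sub_one_lt.le p k).trans_eq <| by
    rw [natDegree_sixteen_mul_X_sq, mul_comm]

lemma coeff_sNumerator (p : ℂ[X]) (k : ℕ) :
    (sNumerator p k).coeff (2 * k) = p.coeff k * 16 ^ k := by
  have := coeff_aeval_homogenize natDegree_X_sub_one_lt p k
  rw [natDegree_sixteen_mul_X_sq, leadingCoeff_sixteen_mul_X_sq] at this
  rw [sNumerator, mul_comm 2 k, this]

lemma l_sub_one_ne_zero : l - 1 ≠ 0 := by
  have : l - 1 = algebraMap ℂ[X] (RatFunc ℂ) (X - C 1) := by simp [l]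
  rw [this]
  exact RatFunc.algebraMap_ne_zero (X_sub_C_ne_zero 1)

lemma s_mul_l_sub_one : s * (l - 1) = 16 * l ^ 2 :=
  div_mul_cancel₀ _ l_sub_one_ne_zero

lemma algebraMap_sNumerator {p : ℂ[X]} {k : ℕ} (hp : p.natDegree ≤ k) :
    algebraMap ℂ[X] (RatFunc ℂ) (sNumerator p k) = aeval s p * (l - 1) ^ k := by
  have hcomp : (fun i => IsScalarTower.toAlgHom ℂ ℂ[X] (RatFunc ℂ) (![16 * X ^ 2, X - 1] i)) =
      ![16 * l ^ 2, l - 1] := by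
    ext i; fin_cases i <;> simp [l, map_ofNat (algebraMap ℂ[X] (RatFunc ℂ)) 16]
  rw [sNumerator, ← IsScalarTower.coe_toAlgHom' ℂ, MvPolynomial.comp_aeval_apply, hcomp,
    aeval_homogenize_eq_aeval_div_mul_pow hp _ l_sub_one_ne_zero, s]

lemma algebraMap_X_eq_l : algebraMap ℂ[X] (RatFunc ℂ) X = l :=
  RatFunc.algebraMap_X

noncomputable def identityNumerator (P Q : ℂ[X]) (r : ℂ) (n m : ℕ) : ℂ[X] :=
  sNumerator P n * sNumerator Q m * (2 * (X - 1) ^ 2 + C r * (X - 1) * (X - 2) ^ 2) +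
    (sNumerator (X * derivative P) n * sNumerator Q m -
      sNumerator P n * sNumerator (X * derivative Q) m) * ((X - 1) * (X - 2) ^ 2)

lemma identityNumerator_eq {P Q : ℂ[X]} {r c : ℂ} {n m : ℕ} (hP : P.natDegree ≤ n)
    (hQ : Q.natDegree ≤ m)
    (h : aeval s P * aeval s Q * (2 * (l - 1) ^ 2 + RatFunc.C r * (l - 1) * (l - 2) ^ 2) +
        16 * (aeval s (derivative P) * aeval s Q - aeval s (derivative Q) * aeval s P) *
          l ^ 2 * (l - 2) ^ 2 = RatFunc.C c * (l - 1) ^ 2) :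
    identityNumerator P Q r n m = C c * (X - 1) ^ (n + m + 2) := by
  apply RatFunc.algebraMap_injective ℂ
  simp only [identityNumerator, map_add, map_mul, map_sub, map_pow, map_ofNat, map_one,
    RatFunc.algebraMap_C, algebraMap_X_eq_l, algebraMap_sNumerator hP, algebraMap_sNumerator hQ,
    algebraMap_sNumerator ((natDegree_X_mul_derivative_le P).trans hP),
    algebraMap_sNumerator ((natDegree_X_mul_derivative_le Q).trans hQ), aeval_X]
  linear_combination (l - 1) ^ (n + m) * h + (l - 1) ^ (n + m) * (l - 2) ^ 2 *
    (aeval s (derivative P) * aeval s Q - aeval s (derivative Q) * aeval s P) * s_mul_l_sub_one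

lemma natDegree_X_sub_one_mul_X_sub_two_sq : ((X - 1) * (X - 2) ^ 2 : ℂ[X]).natDegree = 3 := by
  compute_degree!

lemma coeff_X_sub_one_mul_X_sub_two_sq : ((X - 1) * (X - 2) ^ 2 : ℂ[X]).coeff 3 = 1 := by
  have hmonic : ((X - 1) * (X - 2) ^ 2 : ℂ[X]).Monic := by monicity!
  simpa [natDegree_X_sub_one_mul_X_sub_two_sq] using hmonic.coeff_natDegree

lemma coeff_identityNumerator (P Q : ℂ[X]) (r : ℂ) (n m : ℕ) :
    (identityNumerator P Q r n m).coeff (2 * n + 2 * m + 3) =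
      P.coeff n * Q.coeff m * 16 ^ (n + m) * (r + n - m) := by
  have hE : (2 * (X - 1) ^ 2 + C r * (X - 1) * (X - 2) ^ 2 : ℂ[X]).natDegree ≤ 3 := by
    compute_degree
  have hE3 : (2 * (X - 1) ^ 2 + C r * (X - 1) * (X - 2) ^ 2 : ℂ[X]).coeff 3 = r := by
    rw [coeff_add, mul_assoc, coeff_C_mul, coeff_X_sub_one_mul_X_sub_two_sq,
      coeff_eq_zero_of_natDegree_lt (by compute_degree!), zero_add, mul_one]
  have hPn := natDegree_sNumerator_le P n
  have hQm := natDegree_sNumerator_le Q m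
  have hP'n := natDegree_sNumerator_le (X * derivative P) n
  have hQ'm := natDegree_sNumerator_le (X * derivative Q) m
  rw [identityNumerator, coeff_add,
    coeff_mul_add_eq_of_natDegree_le (natDegree_mul_le_of_le hPn hQm) hE,
    coeff_mul_add_eq_of_natDegree_le ((natDegree_sub_le _ _).trans <| max_le
      (natDegree_mul_le_of_le hP'n hQm) (natDegree_mul_le_of_le hPn hQ'm))
      natDegree_X_sub_one_mul_X_sub_two_sq.le,
    coeff_sub, coeff_mul_add_eq_of_natDegree_le hPn hQm,
    coeff_mul_add_eq_of_natDegree_le hP'n hQm, coeff_mul_add_eq_of_natDegree_le hPn hQ'm,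
    coeff_sNumerator, coeff_sNumerator, coeff_sNumerator, coeff_sNumerator,
    coeff_X_mul_derivative, coeff_X_mul_derivative, coeff_X_sub_one_mul_X_sub_two_sq, hE3]
  ring

/-- For polynomials `P, Q` with `P(0) ≠ 0`, `Q(0) ≠ 0` and `r ∈ ℚ \ ℤ`, the identity
`P Q [2(λ−1)² + r(λ−1)(λ−2)²] + 16 (P'Q − Q'P) λ²(λ−2)² = c(λ−1)²`
(with `P, Q, P', Q'` evaluated at `X = 16λ²/(λ−1)`, viewed in `ℂ(λ)`) is impossible:
the left-hand side has degree `deg P + deg Q + 3` in `λ` while the right-hand side has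
degree `2`. -/
theorem no_polynomial_identity (P Q : ℂ[X]) (hP : P.eval 0 ≠ 0) (hQ : Q.eval 0 ≠ 0)
    (r : ℚ) (hr : ∀ m : ℤ, r ≠ (m : ℚ)) (c : ℂ) :
    ¬ (aeval s P * aeval s Q *
          (2 * (l - 1) ^ 2 + RatFunc.C (r : ℂ) * (l - 1) * (l - 2) ^ 2) +
        16 * (aeval s (derivative P) * aeval s Q - aeval s (derivative Q) * aeval s P) *
          l ^ 2 * (l - 2) ^ 2 =
      RatFunc.C c * (l - 1) ^ 2) := by
  intro h
  have hP0 : P ≠ 0 := by rintro rfl; exact hP eval_zero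
  have hQ0 : Q ≠ 0 := by rintro rfl; exact hQ eval_zero
  have hrnm : (r : ℂ) + P.natDegree - Q.natDegree ≠ 0 := fun h0 =>
    hr (Q.natDegree - P.natDegree) <| by
      exact_mod_cast (by linear_combination h0 : (r : ℂ) = Q.natDegree - P.natDegree)
  have hrhs : (C c * (X - 1) ^ (P.natDegree + Q.natDegree + 2)).natDegree <
      2 * P.natDegree + 2 * Q.natDegree + 3 :=
    (natDegree_C_mul_le _ _).trans_lt <|
      (natDegree_pow_le_of_le _ (natDegree_X_sub_C_le 1)).trans_lt (by omega)
  have htop := congrArg (coeff · (2 * P.natDegree + 2 * Q.natDegree + 3))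
    (identityNumerator_eq le_rfl le_rfl h)
  rw [coeff_identityNumerator, coeff_eq_zero_of_natDegree_lt hrhs] at htop
  simp [hP0, hQ0, hrnm] at htop
end
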